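/- arXiv:math/0306373 — 2 statements merged into one kernel-verified Lean document; each statement's English description precedes it below -/
import Mathlib

section
/- Let N ≥ 3, a < (N-2)/2, and let μ_a be the measure on ℝ^N with density |x|^{-2a}. Fix x ∈ ℝ^N, R > 0, and positive constants A_1, A_2, α, β with α < β. Suppose Φ : [0, R] → [0, ∞) is nondecreasing and satisfies Φ(ρ) ≤ A_1 μ_a(B_ρ(x)) μ_a(B_r(x))^{-1} (ρ/r)^{-α} Φ(r) + A_2 μ_a(B_r(x)) r^{-β} for all 0 < ρ ≤ r ≤ R. Then for every γ ∈ (α, β) there exists a constant C = C(N, a, A_1, α, β, γ), independent of x, Φ, A_2 and R, such that Φ(ρ) ≤ C ( μ_a(B_ρ(x)) μ_a(B_r(x))^{-1} (ρ/r)^{-γ} Φ(r) + A_2 μ_a(B_ρ(x)) ρ^{-β} ) for all 0 < ρ ≤ r ≤ R. -/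
open MeasureTheory Metric Set

/-- The weighted measure `μ_a` on `ℝ^N` with density `|x|^{-2a}`. -/
noncomputable def muW (N : ℕ) (a : ℝ) : Measure (EuclideanSpace ℝ (Fin N)) :=
  volume.withDensity (fun x => ENNReal.ofReal (‖x‖ ^ (-(2 * a))))

/-- `φ` is a `C_c^∞` test function supported in `Ω`. -/
def IsTest {N : ℕ} (Ω : Set (EuclideanSpace ℝ (Fin N)))
    (φ : EuclideanSpace ℝ (Fin N) → ℝ) : Prop :=
  ContDiff ℝ (⊤ : ℕ∞) φ ∧ HasCompactSupport φ ∧ tsupport φ ⊆ Ω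

/-- `g` is a weak gradient of `u` on the open set `Ω`. -/
def IsWeakGradOn {N : ℕ} (Ω : Set (EuclideanSpace ℝ (Fin N)))
    (u : EuclideanSpace ℝ (Fin N) → ℝ)
    (g : EuclideanSpace ℝ (Fin N) → EuclideanSpace ℝ (Fin N)) : Prop :=
  LocallyIntegrableOn u Ω volume ∧ LocallyIntegrableOn g Ω volume ∧
  ∀ φ, IsTest Ω φ → ∀ y,
    ∫ x in Ω, u x * (fderiv ℝ φ x y) = - ∫ x in Ω, (inner ℝ (g x) y : ℝ) * φ x

/-- `v` is locally `α`-Hölder continuous on `Ω`. -/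
def LocHolderOn {N : ℕ} (α : ℝ) (Ω : Set (EuclideanSpace ℝ (Fin N)))
    (v : EuclideanSpace ℝ (Fin N) → ℝ) : Prop :=
  ∀ x ∈ Ω, ∃ t ∈ nhdsWithin x Ω, ∃ C : NNReal, HolderOnWith C α.toNNReal v t

section FSaux
open Real

variable {N : ℕ} {a : ℝ}


lemma muW_apply {s : Set (EuclideanSpace ℝ (Fin N))} (hs : MeasurableSet s) :
    muW N a s = ∫⁻ y in s, ENNReal.ofReal (‖y‖ ^ (-(2 * a))) := by
  rw [muW, withDensity_apply _ hs]

lemma muW_le_bound {s : Set (EuclideanSpace ℝ (Fin N))} (hs : MeasurableSet s) {D : ℝ}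
    (hD : ∀ y ∈ s, ‖y‖ ^ (-(2 * a)) ≤ D) :
    muW N a s ≤ ENNReal.ofReal D * volume s := by
  rw [muW_apply hs]
  calc ∫⁻ y in s, ENNReal.ofReal (‖y‖ ^ (-(2 * a)))
      ≤ ∫⁻ _ in s, ENNReal.ofReal D :=
        setLIntegral_mono' hs fun y hy => ENNReal.ofReal_le_ofReal (hD y hy)
    _ = ENNReal.ofReal D * volume s := setLIntegral_const s _

lemma bound_le_muW {s : Set (EuclideanSpace ℝ (Fin N))} (hs : MeasurableSet s) {D : ℝ}
    (hD : ∀ y ∈ s, D ≤ ‖y‖ ^ (-(2 * a))) :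
    ENNReal.ofReal D * volume s ≤ muW N a s := by
  rw [muW_apply hs]
  calc ENNReal.ofReal D * volume s = ∫⁻ _ in s, ENNReal.ofReal D := (setLIntegral_const s _).symm
    _ ≤ ∫⁻ y in s, ENNReal.ofReal (‖y‖ ^ (-(2 * a))) :=
        setLIntegral_mono' hs fun y hy => ENNReal.ofReal_le_ofReal (hD y hy)

lemma rpow_le_ratio {t A c p : ℝ} (ht : 0 < t) (hA : 0 < A) (hc : 1 ≤ c)
    (h1 : t ≤ c * A) (h2 : A ≤ c * t) : t ^ p ≤ c ^ |p| * A ^ p := by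
  rcases le_or_gt 0 p with hp | hp
  · have h := Real.rpow_le_rpow ht.le h1 hp
    rw [Real.mul_rpow (by linarith) hA.le] at h
    refine h.trans (mul_le_mul_of_nonneg_right
      (Real.rpow_le_rpow_of_exponent_le hc (le_abs_self p))
      (Real.rpow_pos_of_pos hA p).le)
  · have hAc : A / c ≤ t := by
      rw [div_le_iff₀ (by linarith)]
      linarith [h2, mul_comm c t]
    have h := Real.rpow_le_rpow_of_nonpos (by positivity) hAc hp.le
    rw [Real.div_rpow hA.le (by linarith)] at h
    have h2' : A ^ p / c ^ p = c ^ (-p) * A ^ p := by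
      rw [Real.rpow_neg (by linarith)]
      field_simp
    rw [h2'] at h
    refine h.trans (mul_le_mul_of_nonneg_right
      (Real.rpow_le_rpow_of_exponent_le hc (neg_le_abs p))
      (Real.rpow_pos_of_pos hA p).le)

lemma vol_ball' (hN : 0 < N) (x : EuclideanSpace ℝ (Fin N)) {r : ℝ} (hr : 0 ≤ r) :
    volume (ball x r) = ENNReal.ofReal (r ^ N) * volume (ball (0 : EuclideanSpace ℝ (Fin N)) 1) := by
  haveI : Nonempty (Fin N) := ⟨⟨0, hN⟩⟩
  rw [Measure.addHaar_ball _ _ hr, finrank_euclideanSpace_fin]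

lemma muW_singleton_zero (hN : 0 < N) : muW N a ({0} : Set (EuclideanSpace ℝ (Fin N))) = 0 := by
  haveI : Nonempty (Fin N) := ⟨⟨0, hN⟩⟩
  rw [muW_apply (measurableSet_singleton 0)]
  exact setLIntegral_measure_zero _ _ (measure_singleton 0)

lemma muW_ball_zero_le (hN : 0 < N) (ha2 : 2 * a < N) :
    ∃ c > 0, ∀ s : ℝ, 0 < s →
      muW N a (ball (0 : EuclideanSpace ℝ (Fin N)) s)
        ≤ ENNReal.ofReal (c * s ^ ((N : ℝ) - 2 * a)) := by
  set E := EuclideanSpace ℝ (Fin N)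
  set e : ℝ := (N : ℝ) - 2 * a with he
  have hepos : 0 < e := by simp only [he]; linarith
  set u : ℝ := (2 : ℝ)⁻¹ with hu
  have hu0 : 0 < u := by norm_num [hu]
  have hu1 : u < 1 := by norm_num [hu]
  set q : ℝ := u ^ e with hq
  have hq0 : 0 < q := Real.rpow_pos_of_pos hu0 e
  have hq1 : q < 1 := Real.rpow_lt_one hu0.le hu1 hepos
  set ω : ℝ := (volume (ball (0 : E) 1)).toReal with hω
  have hωpos : 0 < ω :=
    ENNReal.toReal_pos (measure_ball_pos volume (0:E) one_pos).ne' measure_ball_lt_top.ne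
  have hωeq : volume (ball (0 : E) 1) = ENNReal.ofReal ω :=
    (ENNReal.ofReal_toReal measure_ball_lt_top.ne).symm
  set c0 : ℝ := (2 : ℝ) ^ |2 * a| with hc0
  have hc0pos : 0 < c0 := Real.rpow_pos_of_pos two_pos _
  refine ⟨c0 * ω * (1 - q)⁻¹, by
    have : 0 < (1 - q)⁻¹ := inv_pos.mpr (by linarith)
    positivity, fun s hs => ?_⟩
  set A : ℕ → Set E := fun k => ball (0 : E) (s * u ^ k) \ ball 0 (s * u ^ (k + 1)) with hA
  have hsub : ball (0 : E) s ⊆ {0} ∪ ⋃ k, A k := by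
    intro y hy
    rcases eq_or_ne y 0 with h0 | h0
    · exact Or.inl (by simp [h0])
    · right
      have hy0 : 0 < ‖y‖ := norm_pos_iff.mpr h0
      have hys : ‖y‖ < s := mem_ball_zero_iff.mp hy
      have hex : ∃ k : ℕ, s * u ^ (k + 1) ≤ ‖y‖ := by
        obtain ⟨n, hn⟩ := exists_pow_lt_of_lt_one (div_pos hy0 hs) hu1
        refine ⟨n, ?_⟩
        have h1 : u ^ (n + 1) ≤ u ^ n := pow_le_pow_of_le_one hu0.le hu1.le (by omega)
        have h2 := h1.trans hn.le
        calc s * u ^ (n+1) ≤ s * (‖y‖ / s) := mul_le_mul_of_nonneg_left h2 hs.le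
          _ = ‖y‖ := by field_simp
      refine mem_iUnion.mpr ⟨Nat.find hex, ?_⟩
      constructor
      · rw [mem_ball_zero_iff]
        rcases Nat.eq_zero_or_pos (Nat.find hex) with h | h
        · simpa [h] using hys
        · have hm := Nat.find_min hex (m := Nat.find hex - 1) (by omega)
          push_neg at hm
          have hk1 : Nat.find hex - 1 + 1 = Nat.find hex := by omega
          rwa [hk1] at hm
      · rw [mem_ball_zero_iff, not_lt]
        exact Nat.find_spec hex
  have hAk : ∀ k : ℕ, muW N a (A k) ≤ ENNReal.ofReal (c0 * ω * s ^ e * q ^ k) := by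
    intro k
    have hr0 : 0 < s * u ^ k := by positivity
    have hmeas : MeasurableSet (A k) := measurableSet_ball.diff measurableSet_ball
    have hDb : ∀ y ∈ A k, ‖y‖ ^ (-(2 * a)) ≤ c0 * (s * u ^ k) ^ (-(2 * a)) := by
      intro y hy
      obtain ⟨hy1, hy2⟩ := hy
      rw [mem_ball_zero_iff] at hy1
      rw [mem_ball_zero_iff, not_lt] at hy2
      have hy0 : 0 < ‖y‖ := lt_of_lt_of_le (by positivity) hy2
      have hh2 : s * u ^ k ≤ 2 * ‖y‖ := by
        have e1 : s * u ^ k = 2 * (s * u ^ (k+1)) := by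
          rw [pow_succ, hu]; ring
        rw [e1]; linarith
      have hres := rpow_le_ratio (c := 2) (p := -(2*a)) hy0 hr0 one_le_two (by linarith) hh2
      rw [hc0]
      rwa [abs_neg] at hres
    calc muW N a (A k)
        ≤ ENNReal.ofReal (c0 * (s * u ^ k) ^ (-(2 * a))) * volume (A k) := muW_le_bound hmeas hDb
      _ ≤ ENNReal.ofReal (c0 * (s * u ^ k) ^ (-(2 * a))) * volume (ball (0:E) (s * u ^ k)) := by
          gcongr
          exact diff_subset
      _ = ENNReal.ofReal (c0 * (s * u ^ k) ^ (-(2 * a))) *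
            (ENNReal.ofReal ((s * u ^ k) ^ N) * ENNReal.ofReal ω) := by
          rw [vol_ball' hN _ hr0.le, hωeq]
      _ = ENNReal.ofReal (c0 * ω * s ^ e * q ^ k) := by
          rw [← ENNReal.ofReal_mul (by positivity), ← ENNReal.ofReal_mul (by positivity)]
          congr 1
          have hAe : (s * u ^ k) ^ (-(2*a)) * (s * u ^ k) ^ (N:ℕ) = (s * u ^ k) ^ e := by
            rw [← Real.rpow_natCast (s * u ^ k) N, ← Real.rpow_add hr0]
            congr 1
            rw [he]; ring
          have huke : ((u ^ k : ℝ)) ^ e = q ^ k := by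
            rw [hq, ← Real.rpow_natCast u k, ← Real.rpow_natCast (u ^ e) k,
              ← Real.rpow_mul hu0.le, ← Real.rpow_mul hu0.le, mul_comm]
          have hAe2 : (s * u ^ k) ^ e = s ^ e * q ^ k := by
            rw [Real.mul_rpow hs.le (by positivity), huke]
          calc c0 * (s * u ^ k) ^ (-(2*a)) * ((s * u ^ k) ^ N * ω)
              = c0 * ω * ((s * u ^ k) ^ (-(2*a)) * (s * u ^ k) ^ (N:ℕ)) := by ring
            _ = c0 * ω * (s ^ e * q ^ k) := by rw [hAe, hAe2]
            _ = c0 * ω * s ^ e * q ^ k := by ring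
  calc muW N a (ball (0:E) s) ≤ muW N a ({0} ∪ ⋃ k, A k) := measure_mono hsub
    _ ≤ muW N a {0} + muW N a (⋃ k, A k) := measure_union_le _ _
    _ = muW N a (⋃ k, A k) := by rw [muW_singleton_zero hN, zero_add]
    _ ≤ ∑' k, muW N a (A k) := measure_iUnion_le _
    _ ≤ ∑' k, ENNReal.ofReal (c0 * ω * s ^ e * q ^ k) := ENNReal.tsum_le_tsum hAk
    _ = ENNReal.ofReal (c0 * ω * s ^ e) * ∑' k, (ENNReal.ofReal q) ^ k := by
        rw [← ENNReal.tsum_mul_left]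
        congr 1 with k
        rw [← ENNReal.ofReal_pow hq0.le, ← ENNReal.ofReal_mul (by positivity)]
    _ = ENNReal.ofReal (c0 * ω * s ^ e) * ENNReal.ofReal ((1 - q)⁻¹) := by
        rw [ENNReal.tsum_geometric]
        congr 1
        rw [ENNReal.ofReal_inv_of_pos (by linarith), ENNReal.ofReal_sub _ hq0.le,
          ENNReal.ofReal_one]
    _ = ENNReal.ofReal (c0 * ω * (1 - q)⁻¹ * s ^ e) := by
        rw [← ENNReal.ofReal_mul (by positivity)]
        congr 1
        ring

/-- comparison function -/
noncomputable def gW (N : ℕ) (a : ℝ) (x : EuclideanSpace ℝ (Fin N)) (r : ℝ) : ℝ :=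
  (max ‖x‖ r) ^ (-(2 * a)) * r ^ N

lemma gW_pos {x : EuclideanSpace ℝ (Fin N)} {r : ℝ} (hr : 0 < r) : 0 < gW N a x r := by
  have h1 : 0 < max ‖x‖ r := lt_of_lt_of_le hr (le_max_right _ _)
  exact mul_pos (Real.rpow_pos_of_pos h1 _) (pow_pos hr _)

lemma muW_ball_twosided (hN : 0 < N) (ha2 : 2 * a < N) :
    ∃ c₁ c₂ : ℝ, 0 < c₁ ∧ 0 < c₂ ∧
      ∀ (x : EuclideanSpace ℝ (Fin N)) (r : ℝ), 0 < r →
        ENNReal.ofReal (c₁ * gW N a x r) ≤ muW N a (ball x r) ∧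
        muW N a (ball x r) ≤ ENNReal.ofReal (c₂ * gW N a x r) := by
  set E := EuclideanSpace ℝ (Fin N)
  haveI : Nonempty (Fin N) := ⟨⟨0, hN⟩⟩
  set p : ℝ := -(2 * a) with hp
  have habs : |p| = |2 * a| := abs_neg _
  set ω : ℝ := (volume (ball (0 : E) 1)).toReal with hω
  have hωpos : 0 < ω :=
    ENNReal.toReal_pos (measure_ball_pos volume (0:E) one_pos).ne' measure_ball_lt_top.ne
  have hωeq : volume (ball (0 : E) 1) = ENNReal.ofReal ω :=
    (ENNReal.ofReal_toReal measure_ball_lt_top.ne).symm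
  set c0 : ℝ := (2 : ℝ) ^ |2 * a| with hc0
  have hc0pos : 0 < c0 := Real.rpow_pos_of_pos two_pos _
  have hc01 : 1 ≤ c0 := Real.one_le_rpow one_le_two (abs_nonneg _)
  set c4 : ℝ := (4 : ℝ) ^ |2 * a| with hc4
  have hc4pos : 0 < c4 := Real.rpow_pos_of_pos four_pos _
  obtain ⟨cc, hccpos, hcc⟩ := muW_ball_zero_le hN ha2
  set e : ℝ := (N : ℝ) - 2 * a with he
  -- constants
  set c₂A : ℝ := c0 * ω with hc₂A
  set c₂B : ℝ := cc * 3 ^ e * c0 with hc₂B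
  set c₁A : ℝ := ω / c0 with hc₁A
  set c₁B : ℝ := ω / (c4 * 4 ^ N * c0) with hc₁B
  refine ⟨min c₁A c₁B, max c₂A c₂B, by positivity, by positivity, fun x r hr => ?_⟩
  have hgpos : 0 < gW N a x r := gW_pos hr
  have hmax : 0 < max ‖x‖ r := lt_of_lt_of_le hr (le_max_right _ _)
  constructor
  · -- lower bound
    have key : ∃ cA ∈ ({c₁A, c₁B} : Set ℝ), ENNReal.ofReal (cA * gW N a x r) ≤ muW N a (ball x r) := by
      rcases le_or_gt (2 * r) ‖x‖ with hcase | hcase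
      · -- far from origin
        have hx0 : 0 < ‖x‖ := by linarith
        refine ⟨c₁A, by simp, ?_⟩
        have hmx : max ‖x‖ r = ‖x‖ := max_eq_left (by linarith)
        have hD : ∀ y ∈ ball x r, ‖x‖ ^ p / c0 ≤ ‖y‖ ^ p := by
          intro y hy
          have hd : dist y x < r := mem_ball.mp hy
          rw [dist_eq_norm] at hd
          have h1 : ‖x‖ - ‖y‖ ≤ r := by
            have := norm_sub_norm_le y x
            have h2 := abs_le.mp (abs_norm_sub_norm_le y x)
            linarith [hd, h2.1]
          have hy0 : 0 < ‖y‖ := by linarith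
          have hyx : ‖y‖ ≤ ‖x‖ + r := by
            have h2 := abs_le.mp (abs_norm_sub_norm_le y x)
            linarith [hd, h2.2]
          have := rpow_le_ratio (t := ‖x‖) (A := ‖y‖) (c := 2) (p := p) hx0 hy0 one_le_two
            (by linarith) (by linarith)
          rw [habs, ← hc0] at this
          rw [div_le_iff₀ hc0pos]
          linarith [this, mul_comm (‖y‖ ^ p) c0]
        have := bound_le_muW measurableSet_ball hD
        rw [vol_ball' hN x hr.le, hωeq] at this
        refine le_trans (le_of_eq ?_) this
        rw [← ENNReal.ofReal_mul (by positivity), ← ENNReal.ofReal_mul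
          (by positivity)]
        congr 1
        rw [gW, hmx, hc₁A]
        ring
      · -- near origin : ball z (r/4) ⊆ ball x r with ‖z‖ = ‖x‖ + r/2
        refine ⟨c₁B, by simp, ?_⟩
        obtain ⟨u, hu⟩ : ∃ u : E, ‖u‖ = 1 := exists_norm_eq E zero_le_one
        have hz : ∃ z : E, dist z x = r / 2 ∧ ‖z‖ = ‖x‖ + r / 2 := by
          rcases eq_or_ne x 0 with h0 | h0
          · refine ⟨(r/2) • u, ?_, ?_⟩
            · rw [h0, dist_zero_right, norm_smul, hu, Real.norm_eq_abs,
                abs_of_pos (by linarith)]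
              simp
            · rw [h0, norm_smul, hu, norm_zero, Real.norm_eq_abs, abs_of_pos (by linarith)]
              simp
          · have hx0 : 0 < ‖x‖ := norm_pos_iff.mpr h0
            refine ⟨(1 + r / (2 * ‖x‖)) • x, ?_, ?_⟩
            · rw [dist_eq_norm]
              have : (1 + r / (2 * ‖x‖)) • x - x = (r / (2 * ‖x‖)) • x := by
                rw [add_smul, one_smul]; abel
              rw [this, norm_smul, Real.norm_eq_abs, abs_of_pos (by positivity)]
              field_simp
            · rw [norm_smul, Real.norm_eq_abs, abs_of_pos (by positivity)]
              field_simp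
        obtain ⟨z, hzx, hzn⟩ := hz
        have hsub : ball z (r/4) ⊆ ball x r := by
          intro y hy
          have := mem_ball.mp hy
          rw [mem_ball]
          calc dist y x ≤ dist y z + dist z x := dist_triangle _ _ _
            _ < r/4 + r/2 := by linarith
            _ ≤ r := by linarith
        have hD : ∀ y ∈ ball z (r/4), r ^ p / c4 ≤ ‖y‖ ^ p := by
          intro y hy
          have hd : dist y z < r/4 := mem_ball.mp hy
          rw [dist_eq_norm] at hd
          have h2 := abs_le.mp (abs_norm_sub_norm_le y z)
          have hylb : r/4 ≤ ‖y‖ := by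
            have : ‖z‖ - ‖y‖ ≤ r/4 := by linarith [h2.1]
            have hxnn : 0 ≤ ‖x‖ := norm_nonneg x
            linarith
          have hyub : ‖y‖ ≤ 3 * r := by
            have : ‖y‖ - ‖z‖ ≤ r/4 := by linarith [h2.2]
            linarith
          have hy0 : 0 < ‖y‖ := by linarith
          have := rpow_le_ratio (t := r) (A := ‖y‖) (c := 4) (p := p) hr hy0 (by norm_num)
            (by linarith) (by linarith)
          rw [habs, ← hc4] at this
          rw [div_le_iff₀ hc4pos]
          linarith [this, mul_comm (‖y‖ ^ p) c4]
        have hstep := bound_le_muW measurableSet_ball hD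
        have hvol : volume (ball z (r/4)) = ENNReal.ofReal ((r/4) ^ N) * ENNReal.ofReal ω := by
          rw [vol_ball' hN z (by linarith : (0:ℝ) ≤ r/4), hωeq]
        rw [hvol] at hstep
        have hmono := measure_mono (μ := muW N a) hsub
        refine le_trans ?_ (hstep.trans hmono)
        rw [← ENNReal.ofReal_mul (by positivity), ← ENNReal.ofReal_mul (by positivity)]
        apply ENNReal.ofReal_le_ofReal
        -- c₁B * gW ≤ r^p/c4 * ((r/4)^N * ω)
        have hgle : gW N a x r ≤ c0 * r ^ p * r ^ N := by
          rw [gW]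
          have := rpow_le_ratio (t := max ‖x‖ r) (A := r) (c := 2) (p := p) hmax hr one_le_two
            (by rw [max_le_iff]; constructor <;> linarith [le_max_right ‖x‖ r])
            (by linarith [le_max_right ‖x‖ r])
          rw [habs, ← hc0] at this
          exact mul_le_mul_of_nonneg_right this (by positivity)
        calc c₁B * gW N a x r ≤ c₁B * (c0 * r ^ p * r ^ N) := by
              apply mul_le_mul_of_nonneg_left hgle (by positivity)
          _ = r ^ p / c4 * ((r/4) ^ N * ω) := by
              rw [hc₁B, div_pow r 4 N]
              field_simp
      
    obtain ⟨cA, hcA, hle⟩ := key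
    refine le_trans (ENNReal.ofReal_le_ofReal ?_) hle
    apply mul_le_mul_of_nonneg_right _ hgpos.le
    rcases hcA with h | h
    · rw [h]; exact min_le_left _ _
    · rw [mem_singleton_iff] at h; rw [h]; exact min_le_right _ _
  · -- upper bound
    have key : ∃ cB ∈ ({c₂A, c₂B} : Set ℝ), muW N a (ball x r) ≤ ENNReal.ofReal (cB * gW N a x r) := by
      rcases le_or_gt (2 * r) ‖x‖ with hcase | hcase
      · have hx0 : 0 < ‖x‖ := by linarith
        refine ⟨c₂A, by simp, ?_⟩
        have hmx : max ‖x‖ r = ‖x‖ := max_eq_left (by linarith)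
        have hD : ∀ y ∈ ball x r, ‖y‖ ^ p ≤ c0 * ‖x‖ ^ p := by
          intro y hy
          have hd : dist y x < r := mem_ball.mp hy
          rw [dist_eq_norm] at hd
          have h2 := abs_le.mp (abs_norm_sub_norm_le y x)
          have hy0 : 0 < ‖y‖ := by linarith [h2.1]
          have := rpow_le_ratio (t := ‖y‖) (A := ‖x‖) (c := 2) (p := p) hy0 hx0 one_le_two
            (by linarith [h2.2]) (by linarith [h2.1])
          rwa [habs, ← hc0] at this
        have hstep := muW_le_bound measurableSet_ball hD
        rw [vol_ball' hN x hr.le, hωeq] at hstep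
        refine hstep.trans (le_of_eq ?_)
        rw [← ENNReal.ofReal_mul (by positivity), ← ENNReal.ofReal_mul (by positivity)]
        congr 1
        rw [gW, hmx, hc₂A]
        ring
      · refine ⟨c₂B, by simp, ?_⟩
        have hsub : ball x r ⊆ ball (0 : E) (3 * r) := by
          intro y hy
          have hd : dist y x < r := mem_ball.mp hy
          rw [dist_eq_norm] at hd
          rw [mem_ball_zero_iff]
          have h2 := abs_le.mp (abs_norm_sub_norm_le y x)
          linarith [h2.2]
        have hstep := (measure_mono (μ := muW N a) hsub).trans (hcc (3 * r) (by linarith))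
        refine hstep.trans (ENNReal.ofReal_le_ofReal ?_)
        -- cc * (3r)^e ≤ c₂B * gW
        have hre : (3 * r) ^ e = 3 ^ e * (r ^ p * r ^ N) := by
          rw [Real.mul_rpow (by norm_num) hr.le]
          congr 1
          rw [← Real.rpow_natCast r N, ← Real.rpow_add hr]
          congr 1
          rw [he, hp]; ring
        have hrp : r ^ p ≤ c0 * (max ‖x‖ r) ^ p := by
          have := rpow_le_ratio (t := r) (A := max ‖x‖ r) (c := 2) (p := p) hr hmax one_le_two
            (by linarith [le_max_right ‖x‖ r]) (by rw [max_le_iff]; constructor <;> linarith)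
          rwa [habs, ← hc0] at this
        calc cc * (3 * r) ^ e = cc * 3 ^ e * (r ^ p * r ^ N) := by rw [hre]; ring
          _ ≤ cc * 3 ^ e * (c0 * (max ‖x‖ r) ^ p * r ^ N) := by
              apply mul_le_mul_of_nonneg_left _ (by positivity)
              exact mul_le_mul_of_nonneg_right hrp (by positivity)
          _ = c₂B * gW N a x r := by rw [hc₂B, gW]; ring
    obtain ⟨cB, hcB, hle⟩ := key
    refine hle.trans (ENNReal.ofReal_le_ofReal ?_)
    apply mul_le_mul_of_nonneg_right _ hgpos.le
    rcases hcB with h | h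
    · rw [h]; exact le_max_left _ _
    · rw [mem_singleton_iff] at h; rw [h]; exact le_max_right _ _

lemma gW_ratio {N : ℕ} {a : ℝ} {x : EuclideanSpace ℝ (Fin N)} {r τ : ℝ}
    (hτ0 : 0 < τ) (hτ1 : τ ≤ 1) (hr : 0 < r) :
    gW N a x r ≤ τ⁻¹ ^ |2 * a| * τ⁻¹ ^ N * gW N a x (τ * r) := by
  have hτr : 0 < τ * r := by positivity
  have hM : 0 < max ‖x‖ r := lt_of_lt_of_le hr (le_max_right _ _)
  have hM' : 0 < max ‖x‖ (τ * r) := lt_of_lt_of_le hτr (le_max_right _ _)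
  have hc : 1 ≤ τ⁻¹ := by
    rw [le_inv_comm₀ one_pos hτ0]; simpa using hτ1
  have hM'M : max ‖x‖ (τ * r) ≤ max ‖x‖ r := by
    apply max_le_max le_rfl
    nlinarith
  have hMM'aux : τ * max ‖x‖ r ≤ max ‖x‖ (τ * r) := by
    rcases le_total ‖x‖ r with hcase | hcase
    · rw [max_eq_right hcase]; exact le_max_right _ _
    · rw [max_eq_left hcase]
      exact le_trans (by nlinarith [norm_nonneg x]) (le_max_left _ _)
  have hMM' : max ‖x‖ r ≤ τ⁻¹ * max ‖x‖ (τ * r) := by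
    calc max ‖x‖ r = τ⁻¹ * (τ * max ‖x‖ r) := by field_simp
      _ ≤ τ⁻¹ * max ‖x‖ (τ * r) :=
          mul_le_mul_of_nonneg_left hMM'aux (inv_pos.mpr hτ0).le
  have h1 := rpow_le_ratio (t := max ‖x‖ r) (A := max ‖x‖ (τ * r)) (c := τ⁻¹)
    (p := -(2 * a)) hM hM' hc hMM' (by nlinarith)
  rw [abs_neg] at h1
  have h2 : (r : ℝ) ^ N = τ⁻¹ ^ N * (τ * r) ^ N := by
    rw [← mul_pow, ← mul_assoc, inv_mul_cancel₀ hτ0.ne', one_mul]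
  rw [gW, gW, h2]
  calc (max ‖x‖ r) ^ (-(2*a)) * (τ⁻¹ ^ N * (τ*r) ^ N)
      ≤ (τ⁻¹ ^ |2*a| * (max ‖x‖ (τ*r)) ^ (-(2*a))) * (τ⁻¹ ^ N * (τ*r) ^ N) := by
        apply mul_le_mul_of_nonneg_right h1 (by positivity)
    _ = τ⁻¹ ^ |2*a| * τ⁻¹ ^ N * ((max ‖x‖ (τ*r)) ^ (-(2*a)) * (τ*r) ^ N) := by ring


end FSaux

/-- Iteration lemma for the weighted measure `μ_a` (Lemma A.2 of Felli–Schneider). -/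
theorem statement7 {N : ℕ} (hN : 3 ≤ N) (a : ℝ) (ha : a < ((N : ℝ) - 2) / 2)
    (A₁ α β γ : ℝ) (hA₁ : 0 < A₁) (hα : 0 < α) (hβ : 0 < β) (hαβ : α < β)
    (hγ : γ ∈ Set.Ioo α β) :
    ∃ C > (0 : ℝ),
      ∀ (x : EuclideanSpace ℝ (Fin N)) (R A₂ : ℝ) (Φ : ℝ → ℝ),
        0 < R → 0 < A₂ →
        (∀ t ∈ Set.Icc (0 : ℝ) R, 0 ≤ Φ t) →
        MonotoneOn Φ (Set.Icc (0 : ℝ) R) →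
        (∀ ρ r : ℝ, 0 < ρ → ρ ≤ r → r ≤ R →
          Φ ρ ≤ A₁ * (muW N a (Metric.ball x ρ)).toReal *
                  ((muW N a (Metric.ball x r)).toReal)⁻¹ * (ρ / r) ^ (-α) * Φ r
                + A₂ * (muW N a (Metric.ball x r)).toReal * r ^ (-β)) →
        ∀ ρ r : ℝ, 0 < ρ → ρ ≤ r → r ≤ R →
          Φ ρ ≤ C * ((muW N a (Metric.ball x ρ)).toReal *
                      ((muW N a (Metric.ball x r)).toReal)⁻¹ * (ρ / r) ^ (-γ) * Φ r
                     + A₂ * (muW N a (Metric.ball x ρ)).toReal * ρ ^ (-β)) := by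
  obtain ⟨hγ1, hγ2⟩ := hγ
  have hN0 : 0 < N := by omega
  have hN3 : (3:ℝ) ≤ (N:ℝ) := by exact_mod_cast hN
  have ha2 : 2 * a < (N:ℝ) := by linarith
  have hγ0 : 0 < γ := lt_trans hα hγ1
  obtain ⟨c₁, c₂, hc₁, hc₂, hts⟩ := muW_ball_twosided (a := a) hN0 ha2
  -- the real-valued measure of balls
  set m : EuclideanSpace ℝ (Fin N) → ℝ → ℝ := fun x r => (muW N a (ball x r)).toReal with hm
  have hfin : ∀ (x : EuclideanSpace ℝ (Fin N)) (r : ℝ), 0 < r → muW N a (ball x r) ≠ ⊤ :=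
    fun x r hr => (lt_of_le_of_lt (hts x r hr).2 ENNReal.ofReal_lt_top).ne
  have hub : ∀ (x) (r : ℝ), 0 < r → m x r ≤ c₂ * gW N a x r := by
    intro x r hr
    have := ENNReal.toReal_mono ENNReal.ofReal_ne_top (hts x r hr).2
    rwa [ENNReal.toReal_ofReal (mul_pos hc₂ (gW_pos hr)).le] at this
  have hlb : ∀ (x) (r : ℝ), 0 < r → c₁ * gW N a x r ≤ m x r := by
    intro x r hr
    have := ENNReal.toReal_mono (hfin x r hr) (hts x r hr).1
    rwa [ENNReal.toReal_ofReal (mul_pos hc₁ (gW_pos hr)).le] at this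
  have hmpos : ∀ (x) (r : ℝ), 0 < r → 0 < m x r := by
    intro x r hr
    exact lt_of_lt_of_le (mul_pos hc₁ (gW_pos hr)) (hlb x r hr)
  have hmmono : ∀ (x) (ρ r : ℝ), 0 < ρ → ρ ≤ r → m x ρ ≤ m x r := by
    intro x ρ r hρ hρr
    exact ENNReal.toReal_mono (hfin x r (lt_of_lt_of_le hρ hρr))
      (measure_mono (ball_subset_ball hρr))
  -- choice of τ
  set τ : ℝ := min (1/2) (A₁⁻¹ ^ (γ - α)⁻¹) with hτdef
  have hτ0 : 0 < τ := lt_min (by norm_num) (Real.rpow_pos_of_pos (inv_pos.mpr hA₁) _)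
  have hτ1 : τ < 1 := lt_of_le_of_lt (min_le_left _ _) (by norm_num)
  have hkey : A₁ * τ ^ (-α) ≤ τ ^ (-γ) := by
    have h1 : τ ^ (γ - α) ≤ A₁⁻¹ := by
      have h2 : τ ≤ A₁⁻¹ ^ (γ - α)⁻¹ := min_le_right _ _
      have h3 := Real.rpow_le_rpow hτ0.le h2 (by linarith : (0:ℝ) ≤ γ - α)
      rwa [← Real.rpow_mul (inv_pos.mpr hA₁).le, inv_mul_cancel₀
        (by intro h; rw [sub_eq_zero] at h; exact absurd h.symm (ne_of_lt hγ1)),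
        Real.rpow_one] at h3
    have h4 : A₁ * τ ^ (γ - α) ≤ 1 := by
      calc A₁ * τ ^ (γ - α) ≤ A₁ * A₁⁻¹ := by
            apply mul_le_mul_of_nonneg_left h1 hA₁.le
        _ = 1 := mul_inv_cancel₀ hA₁.ne'
    have h5 : τ ^ (-α) = τ ^ (γ - α) * τ ^ (-γ) := by
      rw [← Real.rpow_add hτ0]; congr 1; ring
    rw [h5, ← mul_assoc]
    calc A₁ * τ ^ (γ - α) * τ ^ (-γ) ≤ 1 * τ ^ (-γ) :=
          mul_le_mul_of_nonneg_right h4 (Real.rpow_pos_of_pos hτ0 _).le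
      _ = τ ^ (-γ) := one_mul _
  -- doubling constant
  set K : ℝ := max 1 (c₂ * (τ⁻¹ ^ |2 * a| * τ⁻¹ ^ N) / c₁) with hKdef
  have hK1 : 1 ≤ K := le_max_left _ _
  have hK0 : 0 < K := lt_of_lt_of_le one_pos hK1
  have hdbl : ∀ (x) (r : ℝ), 0 < r → m x r ≤ K * m x (τ * r) := by
    intro x r hr
    have hτr : 0 < τ * r := by positivity
    calc m x r ≤ c₂ * gW N a x r := hub x r hr
      _ ≤ c₂ * (τ⁻¹ ^ |2 * a| * τ⁻¹ ^ N * gW N a x (τ * r)) := by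
          apply mul_le_mul_of_nonneg_left (gW_ratio hτ0 hτ1.le hr) hc₂.le
      _ = (c₂ * (τ⁻¹ ^ |2 * a| * τ⁻¹ ^ N) / c₁) * (c₁ * gW N a x (τ * r)) := by
          field_simp
      _ ≤ K * m x (τ * r) := by
          apply mul_le_mul (le_max_right _ _) (hlb x (τ * r) hτr)
            (mul_pos hc₁ (gW_pos hτr)).le hK0.le
  -- B and C
  have hDpos : 0 < τ ^ (-β) - τ ^ (-γ) := by
    have := Real.rpow_lt_rpow_of_exponent_gt hτ0 hτ1 (by linarith : -β < -γ)
    linarith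
  set B : ℝ := K / (τ ^ (-β) - τ ^ (-γ)) with hBdef
  have hB0 : 0 < B := div_pos hK0 hDpos
  have hBK : τ ^ (-γ) * B + K = τ ^ (-β) * B := by
    rw [hBdef]; field_simp; ring
  set C : ℝ := K * max B 1 with hCdef
  have hC0 : 0 < C := mul_pos hK0 (lt_of_lt_of_le one_pos (le_max_right _ _))
  refine ⟨C, hC0, ?_⟩
  intro x R A₂ Φ hR hA₂ hΦ0 hΦmono hH ρ r hρ hρr hrR
  have hr : 0 < r := lt_of_lt_of_le hρ hρr
  -- the induction
  have hind : ∀ k : ℕ, Φ (τ ^ k * r) ≤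
      (m x (τ ^ k * r)) * (m x r)⁻¹ * (τ ^ k : ℝ) ^ (-γ) * Φ r
        + A₂ * m x (τ ^ k * r) * ((τ ^ k * r) ^ (-β)) * B := by
    intro k
    induction k with
    | zero =>
        simp only [pow_zero, one_mul]
        have h1 : m x r * (m x r)⁻¹ = 1 := mul_inv_cancel₀ (hmpos x r hr).ne'
        rw [Real.one_rpow, mul_one, h1, one_mul]
        have : (0:ℝ) ≤ A₂ * m x r * r ^ (-β) * B :=
          mul_nonneg (mul_nonneg (mul_nonneg hA₂.le (hmpos x r hr).le)
            (Real.rpow_pos_of_pos hr _).le) hB0.le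
        linarith
    | succ k ih =>
        have hτk : 0 < (τ:ℝ) ^ k := pow_pos hτ0 k
        have hτk1 : 0 < (τ:ℝ) ^ (k+1) := pow_pos hτ0 (k+1)
        have hrk : 0 < τ ^ k * r := by positivity
        have hrk1 : 0 < τ ^ (k+1) * r := by positivity
        have hle1 : τ ^ (k+1) * r ≤ τ ^ k * r := by
          apply mul_le_mul_of_nonneg_right _ hr.le
          calc τ ^ (k+1) = τ ^ k * τ := pow_succ τ k
            _ ≤ τ ^ k * 1 := mul_le_mul_of_nonneg_left hτ1.le hτk.le
            _ = τ ^ k := mul_one _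
        have hleR : τ ^ k * r ≤ R := by
          calc τ ^ k * r ≤ 1 * r := by
                apply mul_le_mul_of_nonneg_right _ hr.le
                exact pow_le_one₀ hτ0.le hτ1.le
            _ = r := one_mul _
            _ ≤ R := hrR
        have hstep := hH (τ ^ (k+1) * r) (τ ^ k * r) hrk1 hle1 hleR
        have hdiv : (τ ^ (k+1) * r) / (τ ^ k * r) = τ := by
          rw [pow_succ, mul_comm (τ ^ k) τ, mul_assoc, mul_div_assoc,
            div_self (mul_pos hτk hr).ne', mul_one]
        rw [hdiv] at hstep
        -- abbreviations
        set mk := m x (τ ^ k * r) with hmk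
        set mk1 := m x (τ ^ (k+1) * r) with hmk1
        have hmk0 : 0 < mk := hmpos x _ hrk
        have hmk10 : 0 < mk1 := hmpos x _ hrk1
        have hΦk : 0 ≤ Φ (τ ^ k * r) := hΦ0 _ ⟨hrk.le, hleR⟩
        have hΦr : 0 ≤ Φ r := hΦ0 r ⟨hr.le, hrR⟩
        -- first: A₁ τ^{-α} ≤ τ^{-γ}
        have h1 : A₁ * mk1 * mk⁻¹ * τ ^ (-α) * Φ (τ ^ k * r)
            ≤ τ ^ (-γ) * (mk1 * mk⁻¹) * Φ (τ ^ k * r) := by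
          have e1 : A₁ * mk1 * mk⁻¹ * τ ^ (-α) * Φ (τ ^ k * r)
              = (A₁ * τ ^ (-α)) * (mk1 * mk⁻¹ * Φ (τ ^ k * r)) := by ring
          have e2 : τ ^ (-γ) * (mk1 * mk⁻¹) * Φ (τ ^ k * r)
              = (τ ^ (-γ)) * (mk1 * mk⁻¹ * Φ (τ ^ k * r)) := by ring
          rw [e1, e2]
          exact mul_le_mul_of_nonneg_right hkey
            (mul_nonneg (mul_nonneg hmk10.le (inv_nonneg.mpr hmk0.le)) hΦk)
        -- combine with ih
        have h2 : τ ^ (-γ) * (mk1 * mk⁻¹) * Φ (τ ^ k * r)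
            ≤ τ ^ (-γ) * (mk1 * mk⁻¹) * (mk * (m x r)⁻¹ * (τ ^ k : ℝ) ^ (-γ) * Φ r
               + A₂ * mk * ((τ ^ k * r) ^ (-β)) * B) := by
          exact mul_le_mul_of_nonneg_left ih
            (mul_nonneg (Real.rpow_pos_of_pos hτ0 _).le
              (mul_nonneg hmk10.le (inv_nonneg.mpr hmk0.le)))
        -- algebra
        have hpowγ : ((τ ^ (k+1) : ℝ)) ^ (-γ) = (τ ^ k : ℝ) ^ (-γ) * τ ^ (-γ) := by
          rw [pow_succ, Real.mul_rpow hτk.le hτ0.le]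
        have hpowβ : ((τ ^ (k+1) * r : ℝ)) ^ (-β) = τ ^ (-β) * ((τ ^ k * r) ^ (-β)) := by
          rw [pow_succ]
          rw [show τ ^ k * τ * r = τ * (τ ^ k * r) by ring]
          rw [Real.mul_rpow hτ0.le hrk.le]
        have e3 : τ ^ (-γ) * (mk1 * mk⁻¹) * (mk * (m x r)⁻¹ * (τ ^ k : ℝ) ^ (-γ) * Φ r)
            = mk1 * (m x r)⁻¹ * ((τ ^ (k+1) : ℝ)) ^ (-γ) * Φ r := by
          rw [hpowγ]
          field_simp [hmk0.ne', (hmpos x r hr).ne']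
        have e4 : τ ^ (-γ) * (mk1 * mk⁻¹) * (A₂ * mk * ((τ ^ k * r) ^ (-β)) * B)
            = A₂ * mk1 * ((τ ^ k * r) ^ (-β)) * (τ ^ (-γ) * B) := by
          field_simp [hmk0.ne']
        -- final tail inequality
        have hdb := hdbl x (τ ^ k * r) hrk
        rw [show τ * (τ ^ k * r) = τ ^ (k+1) * r by rw [pow_succ]; ring] at hdb
        have h5 : A₂ * mk1 * ((τ ^ k * r) ^ (-β)) * (τ ^ (-γ) * B) + A₂ * mk * ((τ ^ k * r) ^ (-β))
            ≤ A₂ * mk1 * ((τ ^ (k+1) * r) ^ (-β)) * B := by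
          rw [hpowβ]
          have hpw : 0 < ((τ ^ k * r : ℝ)) ^ (-β) := Real.rpow_pos_of_pos hrk _
          have key2 : mk1 * (τ ^ (-γ) * B) + mk ≤ mk1 * (τ ^ (-β) * B) := by
            have heq : mk1 * (τ ^ (-γ) * B) + K * mk1 = mk1 * (τ ^ (-β) * B) := by
              rw [← hBK]; ring
            linarith only [hdb, heq]
          calc A₂ * mk1 * ((τ ^ k * r) ^ (-β)) * (τ ^ (-γ) * B) + A₂ * mk * ((τ ^ k * r) ^ (-β))
              = A₂ * ((τ ^ k * r) ^ (-β)) * (mk1 * (τ ^ (-γ) * B) + mk) := by ring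
            _ ≤ A₂ * ((τ ^ k * r) ^ (-β)) * (mk1 * (τ ^ (-β) * B)) := by
                exact mul_le_mul_of_nonneg_left key2 (mul_nonneg hA₂.le hpw.le)
            _ = A₂ * mk1 * (τ ^ (-β) * ((τ ^ k * r) ^ (-β))) * B := by ring
        calc Φ (τ ^ (k+1) * r)
            ≤ A₁ * mk1 * mk⁻¹ * τ ^ (-α) * Φ (τ ^ k * r) + A₂ * mk * ((τ ^ k * r) ^ (-β)) := hstep
          _ ≤ τ ^ (-γ) * (mk1 * mk⁻¹) * Φ (τ ^ k * r) + A₂ * mk * ((τ ^ k * r) ^ (-β)) := by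
              linarith only [h1]
          _ ≤ τ ^ (-γ) * (mk1 * mk⁻¹) * (mk * (m x r)⁻¹ * (τ ^ k : ℝ) ^ (-γ) * Φ r
               + A₂ * mk * ((τ ^ k * r) ^ (-β)) * B) + A₂ * mk * ((τ ^ k * r) ^ (-β)) := by
              linarith only [h2]
          _ = mk1 * (m x r)⁻¹ * ((τ ^ (k+1) : ℝ)) ^ (-γ) * Φ r
               + (A₂ * mk1 * ((τ ^ k * r) ^ (-β)) * (τ ^ (-γ) * B)
                  + A₂ * mk * ((τ ^ k * r) ^ (-β))) := by
              rw [mul_add, e3, e4]; ring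
          _ ≤ mk1 * (m x r)⁻¹ * ((τ ^ (k+1) : ℝ)) ^ (-γ) * Φ r
               + A₂ * mk1 * ((τ ^ (k+1) * r) ^ (-β)) * B := by
              linarith only [h5]
  -- choice of k for given ρ
  have hex : ∃ k : ℕ, τ ^ (k+1) * r ≤ ρ := by
    obtain ⟨n, hn⟩ := exists_pow_lt_of_lt_one (div_pos hρ hr) hτ1
    refine ⟨n, ?_⟩
    have h1 : τ ^ (n + 1) ≤ τ ^ n := pow_le_pow_of_le_one hτ0.le hτ1.le (by omega)
    have h2 := h1.trans hn.le
    calc τ ^ (n+1) * r ≤ (ρ / r) * r := mul_le_mul_of_nonneg_right h2 hr.le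
      _ = ρ := by field_simp
  set k := Nat.find hex with hkdef
  have hk1 : τ ^ (k+1) * r ≤ ρ := Nat.find_spec hex
  have hk2 : ρ ≤ τ ^ k * r := by
    rcases Nat.eq_zero_or_pos k with h | h
    · rw [h]; simpa using hρr
    · have hm' := Nat.find_min hex (m := k - 1) (by omega)
      push_neg at hm'
      have : k - 1 + 1 = k := by omega
      rw [this] at hm'
      exact hm'.le
  have hτk : 0 < (τ:ℝ) ^ k := pow_pos hτ0 k
  have hrk : 0 < τ ^ k * r := by positivity
  have hrk1 : 0 < τ ^ (k+1) * r := by positivity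
  have hleR : τ ^ k * r ≤ R := by
    calc τ ^ k * r ≤ 1 * r := mul_le_mul_of_nonneg_right (pow_le_one₀ hτ0.le hτ1.le) hr.le
      _ = r := one_mul _
      _ ≤ R := hrR
  have hΦρk : Φ ρ ≤ Φ (τ ^ k * r) := hΦmono ⟨hρ.le, le_trans hρr hrR⟩ ⟨hrk.le, hleR⟩ hk2
  have hind_k := hind k
  -- bounds to convert
  have hmk_le : m x (τ ^ k * r) ≤ K * m x ρ := by
    calc m x (τ ^ k * r) ≤ K * m x (τ * (τ ^ k * r)) := hdbl x _ hrk
      _ ≤ K * m x ρ := by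
          apply mul_le_mul_of_nonneg_left _ hK0.le
          apply hmmono x _ _ (mul_pos hτ0 hrk)
          calc τ * (τ ^ k * r) = τ ^ (k+1) * r := by rw [pow_succ]; ring
            _ ≤ ρ := hk1
  have hγk : ((τ ^ k : ℝ)) ^ (-γ) ≤ (ρ / r) ^ (-γ) := by
    apply Real.rpow_le_rpow_of_nonpos (div_pos hρ hr) _ (by linarith)
    rw [div_le_iff₀ hr]
    exact hk2
  have hβk : ((τ ^ k * r : ℝ)) ^ (-β) ≤ ρ ^ (-β) := by
    apply Real.rpow_le_rpow_of_nonpos hρ hk2 (by linarith)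
  have hΦr : 0 ≤ Φ r := hΦ0 r ⟨hr.le, hrR⟩
  have hmρ : 0 < m x ρ := hmpos x ρ hρ
  have hmr : 0 < m x r := hmpos x r hr
  have hmaxB : B ≤ max B 1 := le_max_left _ _
  have h1max : (1:ℝ) ≤ max B 1 := le_max_right _ _
  calc Φ ρ ≤ Φ (τ ^ k * r) := hΦρk
    _ ≤ (m x (τ ^ k * r)) * (m x r)⁻¹ * (τ ^ k : ℝ) ^ (-γ) * Φ r
        + A₂ * m x (τ ^ k * r) * ((τ ^ k * r) ^ (-β)) * B := hind_k
    _ ≤ (K * m x ρ) * (m x r)⁻¹ * ((ρ / r) ^ (-γ)) * Φ r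
        + A₂ * (K * m x ρ) * (ρ ^ (-β)) * B := by
        apply add_le_add
        · apply mul_le_mul_of_nonneg_right _ hΦr
          calc (m x (τ ^ k * r)) * (m x r)⁻¹ * (τ ^ k : ℝ) ^ (-γ)
              ≤ (K * m x ρ) * (m x r)⁻¹ * (τ ^ k : ℝ) ^ (-γ) := by
                apply mul_le_mul_of_nonneg_right
                  (mul_le_mul_of_nonneg_right hmk_le (inv_nonneg.mpr hmr.le))
                  (Real.rpow_pos_of_pos hτk _).le
            _ ≤ (K * m x ρ) * (m x r)⁻¹ * ((ρ / r) ^ (-γ)) := by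
                apply mul_le_mul_of_nonneg_left hγk
                  (mul_nonneg (mul_nonneg hK0.le hmρ.le) (inv_nonneg.mpr hmr.le))
        · calc A₂ * m x (τ ^ k * r) * ((τ ^ k * r) ^ (-β)) * B
              ≤ A₂ * (K * m x ρ) * ((τ ^ k * r) ^ (-β)) * B := by
                apply mul_le_mul_of_nonneg_right _ hB0.le
                apply mul_le_mul_of_nonneg_right _ (Real.rpow_pos_of_pos hrk _).le
                apply mul_le_mul_of_nonneg_left hmk_le hA₂.le
            _ ≤ A₂ * (K * m x ρ) * (ρ ^ (-β)) * B := by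
                apply mul_le_mul_of_nonneg_right _ hB0.le
                apply mul_le_mul_of_nonneg_left hβk
                  (mul_nonneg hA₂.le (mul_nonneg hK0.le hmρ.le))
    _ ≤ C * (m x ρ * (m x r)⁻¹ * (ρ / r) ^ (-γ) * Φ r + A₂ * m x ρ * ρ ^ (-β)) := by
        rw [hCdef, mul_add]
        apply add_le_add
        · have e5 : (K * m x ρ) * (m x r)⁻¹ * ((ρ / r) ^ (-γ)) * Φ r
              = K * (m x ρ * (m x r)⁻¹ * (ρ / r) ^ (-γ) * Φ r) := by ring
          rw [e5]
          have hterm : 0 ≤ m x ρ * (m x r)⁻¹ * (ρ / r) ^ (-γ) * Φ r :=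
            mul_nonneg (mul_nonneg (mul_nonneg hmρ.le (inv_nonneg.mpr hmr.le))
              (Real.rpow_nonneg (div_nonneg hρ.le hr.le) _)) hΦr
          calc K * (m x ρ * (m x r)⁻¹ * (ρ / r) ^ (-γ) * Φ r)
              ≤ (K * max B 1) * (m x ρ * (m x r)⁻¹ * (ρ / r) ^ (-γ) * Φ r) :=
                mul_le_mul_of_nonneg_right (le_mul_of_one_le_right hK0.le h1max) hterm
            _ = _ := rfl
        · have e6 : A₂ * (K * m x ρ) * (ρ ^ (-β)) * B
              = (K * B) * (A₂ * m x ρ * ρ ^ (-β)) := by ring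
          rw [e6]
          apply mul_le_mul_of_nonneg_right _
            (mul_nonneg (mul_nonneg hA₂.le hmρ.le) (Real.rpow_nonneg hρ.le _))
          apply mul_le_mul_of_nonneg_left hmaxB hK0.le
end

section
/- Let N ≥ 3 and a < (N-2)/2, and let μ_a be the measure on ℝ^N with density |x|^{-2a}. Then for every τ ∈ (0,1) there exists a constant C = C(N, a, τ) > 0 such that for every x ∈ ℝ^N and every r > 0, μ_a(B(x, r)) ≤ C μ_a(B(x, τ r)). -/
open MeasureTheory Metric Set
open scoped ENNReal

namespace FS
variable {N : ℕ}

lemma w_meas (a : ℝ) :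
    Measurable (fun x : EuclideanSpace ℝ (Fin N) => ENNReal.ofReal (‖x‖ ^ (-(2*a)))) :=
  (measurable_norm.pow_const _).ennreal_ofReal

lemma muW_apply (a : ℝ) {s : Set (EuclideanSpace ℝ (Fin N))} (hs : MeasurableSet s) :
    muW N a s = ∫⁻ y in s, ENNReal.ofReal (‖y‖ ^ (-(2*a))) ∂volume := by
  rw [muW, withDensity_apply _ hs]

lemma muW_le_const (a : ℝ) {s : Set (EuclideanSpace ℝ (Fin N))} (hs : MeasurableSet s)
    {B : ℝ} (hB : ∀ y ∈ s, ‖y‖ ^ (-(2*a)) ≤ B) :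
    muW N a s ≤ ENNReal.ofReal B * volume s := by
  rw [muW_apply a hs]
  calc ∫⁻ y in s, ENNReal.ofReal (‖y‖ ^ (-(2*a))) ∂volume
      ≤ ∫⁻ _ in s, ENNReal.ofReal B ∂volume := by
        refine setLIntegral_mono measurable_const fun y hy => ?_
        exact ENNReal.ofReal_le_ofReal (hB y hy)
    _ = ENNReal.ofReal B * volume s := setLIntegral_const _ _

lemma const_le_muW (a : ℝ) {s : Set (EuclideanSpace ℝ (Fin N))} (hs : MeasurableSet s)
    {B : ℝ} (hB : ∀ y ∈ s, B ≤ ‖y‖ ^ (-(2*a))) :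
    ENNReal.ofReal B * volume s ≤ muW N a s := by
  rw [muW_apply a hs]
  calc ENNReal.ofReal B * volume s = ∫⁻ _ in s, ENNReal.ofReal B ∂volume :=
        (setLIntegral_const _ _).symm
    _ ≤ ∫⁻ y in s, ENNReal.ofReal (‖y‖ ^ (-(2*a))) ∂volume := by
        refine setLIntegral_mono (w_meas a) fun y hy => ?_
        exact ENNReal.ofReal_le_ofReal (hB y hy)

lemma vol_ball (hN : 3 ≤ N) (x : EuclideanSpace ℝ (Fin N)) {r : ℝ} (hr : 0 ≤ r) :
    volume (ball x r) =
      ENNReal.ofReal (r ^ N * (volume (ball (0:EuclideanSpace ℝ (Fin N)) 1)).toReal) := by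
  haveI : Nonempty (Fin N) := ⟨⟨0, by omega⟩⟩
  haveI : Nontrivial (EuclideanSpace ℝ (Fin N)) := inferInstance
  rw [Measure.addHaar_ball volume x hr, finrank_euclideanSpace_fin,
    ENNReal.ofReal_mul (pow_nonneg hr _),
    ENNReal.ofReal_toReal measure_ball_lt_top.ne]


lemma muW_scale (a : ℝ) {R : ℝ} (hR : 0 < R)
    {s : Set (EuclideanSpace ℝ (Fin N))} (hs : MeasurableSet s) :
    muW N a s = ENNReal.ofReal (R ^ N) * ENNReal.ofReal (R ^ (-(2*a))) *
      muW N a ((fun y : EuclideanSpace ℝ (Fin N) => R • y) ⁻¹' s) := by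
  set w := fun x : EuclideanSpace ℝ (Fin N) => ENNReal.ofReal (‖x‖ ^ (-(2*a))) with hw_def
  have hw : Measurable w := w_meas a
  have hT : Measurable (fun y : EuclideanSpace ℝ (Fin N) => R • y) := measurable_const_smul R
  have hmap := Measure.map_addHaar_smul (volume : Measure (EuclideanSpace ℝ (Fin N))) hR.ne'
  rw [finrank_euclideanSpace_fin] at hmap
  have key : ENNReal.ofReal ((R ^ N)⁻¹) * muW N a s =
      ENNReal.ofReal (R ^ (-(2*a))) * muW N a ((fun y : EuclideanSpace ℝ (Fin N) => R • y) ⁻¹' s) := by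
    calc ENNReal.ofReal ((R ^ N)⁻¹) * muW N a s
        = ∫⁻ y in s, w y ∂(ENNReal.ofReal (|(R ^ N)⁻¹|) • (volume : Measure (EuclideanSpace ℝ (Fin N)))) := by
          rw [muW_apply a hs, Measure.restrict_smul, lintegral_smul_measure,
            abs_of_nonneg (inv_nonneg.2 (pow_nonneg hR.le _))]
          rfl
      _ = ∫⁻ y in s, w y ∂(Measure.map (fun y : EuclideanSpace ℝ (Fin N) => R • y) volume) := by
          rw [hmap]
      _ = ∫⁻ x in (fun y : EuclideanSpace ℝ (Fin N) => R • y) ⁻¹' s, w (R • x) ∂volume :=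
          setLIntegral_map hs hw hT
      _ = ∫⁻ x in (fun y : EuclideanSpace ℝ (Fin N) => R • y) ⁻¹' s,
            ENNReal.ofReal (R ^ (-(2*a))) * w x ∂volume := by
          refine setLIntegral_congr_fun (hT hs) (fun x _ => ?_)
          simp only [hw_def]
          rw [norm_smul, Real.norm_eq_abs, abs_of_pos hR,
            Real.mul_rpow hR.le (norm_nonneg _), ENNReal.ofReal_mul (Real.rpow_nonneg hR.le _)]
      _ = ENNReal.ofReal (R ^ (-(2*a))) *
            muW N a ((fun y : EuclideanSpace ℝ (Fin N) => R • y) ⁻¹' s) := by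
          rw [lintegral_const_mul _ hw, muW_apply a (hT hs)]
  have h1 : ENNReal.ofReal (R ^ N) * ENNReal.ofReal ((R ^ N)⁻¹) = 1 := by
    rw [← ENNReal.ofReal_mul (pow_nonneg hR.le _), mul_inv_cancel₀ (pow_pos hR N).ne']
    simp
  calc muW N a s = ENNReal.ofReal (R ^ N) * (ENNReal.ofReal ((R ^ N)⁻¹) * muW N a s) := by
        rw [← mul_assoc, h1, one_mul]
    _ = _ := by rw [key, ← mul_assoc]

lemma preimage_smul_ball_zero {R r : ℝ} (hR : 0 < R) :
    (fun y : EuclideanSpace ℝ (Fin N) => R • y) ⁻¹' (ball 0 (R * r)) = ball 0 r := by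
  ext x
  simp only [mem_preimage, mem_ball_zero_iff, norm_smul, Real.norm_eq_abs, abs_of_pos hR]
  exact mul_lt_mul_iff_right₀ hR

lemma muW_ball_zero (a : ℝ) {R : ℝ} (hR : 0 < R) :
    muW N a (ball (0:EuclideanSpace ℝ (Fin N)) R) =
      ENNReal.ofReal (R ^ N) * ENNReal.ofReal (R ^ (-(2*a))) *
        muW N a (ball (0:EuclideanSpace ℝ (Fin N)) 1) := by
  have := muW_scale (N := N) a hR (measurableSet_ball (x := (0:EuclideanSpace ℝ (Fin N))) (ε := R))
  rwa [show (ball (0:EuclideanSpace ℝ (Fin N)) R) = ball 0 (R * 1) by rw [mul_one],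
    preimage_smul_ball_zero hR, mul_one] at this


lemma muW_ball_one_lt_top (hN : 3 ≤ N) {a : ℝ} (ha : a < ((N:ℝ)-2)/2) :
    muW N a (ball (0:EuclideanSpace ℝ (Fin N)) 1) < ⊤ := by
  haveI : Nonempty (Fin N) := ⟨⟨0, by omega⟩⟩
  haveI : Nontrivial (EuclideanSpace ℝ (Fin N)) := inferInstance
  set α := -(2*a) with hα_def
  have hNα : (2:ℝ) < (N:ℝ) + α := by
    have : a * 2 < (N:ℝ) - 2 := (lt_div_iff₀ (by norm_num : (0:ℝ) < 2)).1 ha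
    simp only [hα_def]; linarith
  -- the sets
  set D : ℕ → Set (EuclideanSpace ℝ (Fin N)) :=
    fun k => ball 0 1 \ ball 0 ((2:ℝ)⁻¹ ^ k) with hD_def
  have hDmeas : ∀ k, MeasurableSet (D k) := fun k =>
    measurableSet_ball.diff measurableSet_ball
  set m : ℕ → ℝ≥0∞ := fun k => muW N a (D k) with hm_def
  set P : ℝ≥0∞ := ENNReal.ofReal (2 ^ N * (2:ℝ) ^ α) with hP_def
  have hP1 : 1 < P := by
    rw [hP_def, show (2:ℝ) ^ N * (2:ℝ) ^ α = (2:ℝ) ^ ((N:ℝ) + α) by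
      rw [Real.rpow_add two_pos, Real.rpow_natCast]]
    rw [show (1:ℝ≥0∞) = ENNReal.ofReal 1 by simp]
    exact (ENNReal.ofReal_lt_ofReal_iff (by positivity)).2
      (Real.one_lt_rpow_iff_of_pos two_pos |>.2 (Or.inl ⟨one_lt_two, by linarith⟩))
  set qq : ℝ≥0∞ := P⁻¹ with hqq_def
  have hqq1 : qq < 1 := ENNReal.inv_lt_one.2 hP1
  have hPne0 : P ≠ 0 := by positivity
  have hPnetop : P ≠ ⊤ := ENNReal.ofReal_ne_top
  -- m 1 is finite
  have hm1 : m 1 < ⊤ := by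
    have hle : muW N a (D 1) ≤ ENNReal.ofReal ((2⁻¹:ℝ) ^ α + 1) * volume (D 1) := by
      refine muW_le_const a (hDmeas 1) fun y hy => ?_
      obtain ⟨hy1, hy2⟩ := hy
      rw [mem_ball_zero_iff] at hy1
      rw [mem_ball_zero_iff, not_lt, pow_one] at hy2
      rcases le_or_gt 0 α with hα | hα
      · have h1 : ‖y‖ ^ α ≤ 1 := Real.rpow_le_one (norm_nonneg _) hy1.le hα
        have h2 : (0:ℝ) ≤ (2⁻¹:ℝ) ^ α := Real.rpow_nonneg (by norm_num) _
        linarith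
      · have h1 : ‖y‖ ^ α ≤ (2⁻¹:ℝ) ^ α :=
          Real.rpow_le_rpow_of_nonpos (by norm_num) hy2 hα.le
        linarith
    refine lt_of_le_of_lt hle ?_
    refine ENNReal.mul_lt_top ENNReal.ofReal_lt_top ?_
    exact (measure_mono diff_subset).trans_lt measure_ball_lt_top
  -- scaling recurrence
  have hscale : ∀ k, muW N a (ball (0:EuclideanSpace ℝ (Fin N)) 2⁻¹ \ ball 0 ((2:ℝ)⁻¹ ^ (k+1)))
      = qq * m k := by
    intro k
    have h := muW_scale a two_pos (hDmeas k)
    have hpre : (fun y : EuclideanSpace ℝ (Fin N) => (2:ℝ) • y) ⁻¹' (D k)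
        = ball 0 2⁻¹ \ ball 0 ((2:ℝ)⁻¹ ^ (k+1)) := by
      rw [hD_def]
      rw [preimage_diff,
        show (1:ℝ) = (2:ℝ) * 2⁻¹ by norm_num, preimage_smul_ball_zero two_pos,
        show ((2:ℝ)⁻¹ ^ k) = (2:ℝ) * ((2:ℝ)⁻¹ ^ (k+1)) by rw [pow_succ]; ring]
      rw [preimage_smul_ball_zero two_pos]
    rw [hpre, ← hα_def] at h
    have h2 : ENNReal.ofReal ((2:ℝ) ^ N) * ENNReal.ofReal ((2:ℝ) ^ α) = P := by
      rw [hP_def, ENNReal.ofReal_mul (by positivity)]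
    have hmk : m k = P * muW N a (ball (0:EuclideanSpace ℝ (Fin N)) 2⁻¹ \ ball 0 ((2:ℝ)⁻¹ ^ (k+1))) := by
      show muW N a (D k) = _
      rw [h, h2]
    rw [hmk, hqq_def, ← mul_assoc, ENNReal.inv_mul_cancel hPne0 hPnetop, one_mul]
  -- induction bound
  have hsub : ∀ k, D (k+1) ⊆ D 1 ∪ (ball 0 2⁻¹ \ ball 0 ((2:ℝ)⁻¹ ^ (k+1))) := by
    intro k y hy
    obtain ⟨hy1, hy2⟩ := hy
    rcases le_or_gt (2⁻¹:ℝ) ‖y‖ with h | h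
    · left
      exact ⟨hy1, by rw [mem_ball_zero_iff, pow_one]; exact not_lt.2 h⟩
    · right
      exact ⟨mem_ball_zero_iff.2 h, hy2⟩
  have hqqne : (1 - qq) ≠ 0 := by
    simpa [tsub_eq_zero_iff_le] using hqq1.not_ge
  have hqqtop : (1 - qq) ≠ ⊤ := (tsub_le_self.trans_lt (by norm_num : (1:ℝ≥0∞) < ⊤)).ne
  have hgeom : m 1 + qq * (m 1 * (1 - qq)⁻¹) = m 1 * (1 - qq)⁻¹ := by
    have h1 : (1:ℝ≥0∞) = (1 - qq) + qq := (tsub_add_cancel_of_le hqq1.le).symm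
    calc m 1 + qq * (m 1 * (1 - qq)⁻¹)
        = m 1 * ((1 - qq) * (1 - qq)⁻¹) + qq * (m 1 * (1 - qq)⁻¹) := by
          rw [ENNReal.mul_inv_cancel hqqne hqqtop]; ring
      _ = m 1 * (((1 - qq) + qq) * (1 - qq)⁻¹) := by ring
      _ = m 1 * (1 - qq)⁻¹ := by rw [← h1, one_mul]
  have hbound : ∀ k, m k ≤ m 1 * (1 - qq)⁻¹ := by
    intro k
    induction k with
    | zero =>
      have : D 0 = ∅ := by simp [hD_def]
      simp [hm_def, this]
    | succ k ih =>
      calc m (k+1) ≤ m 1 + muW N a (ball 0 2⁻¹ \ ball 0 ((2:ℝ)⁻¹ ^ (k+1))) := by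
            rw [hm_def]
            exact (measure_mono (hsub k)).trans (measure_union_le _ _)
        _ = m 1 + qq * m k := by rw [hscale k]
        _ ≤ m 1 + qq * (m 1 * (1 - qq)⁻¹) := by gcongr
        _ = m 1 * (1 - qq)⁻¹ := hgeom
  -- union
  have hcover : ball (0:EuclideanSpace ℝ (Fin N)) 1 ⊆ {0} ∪ ⋃ k, D k := by
    intro y hy
    rcases eq_or_ne y 0 with rfl | hy0
    · exact Or.inl rfl
    · right
      have hy' : 0 < ‖y‖ := norm_pos_iff.2 hy0
      obtain ⟨k, hk⟩ := exists_pow_lt_of_lt_one hy' (by norm_num : (2⁻¹:ℝ) < 1)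
      exact mem_iUnion.2 ⟨k, hy, by rw [mem_ball_zero_iff]; exact not_lt.2 hk.le⟩
  have hmono : Monotone D := by
    intro i j hij
    refine diff_subset_diff_right (ball_subset_ball ?_)
    exact pow_le_pow_of_le_one (by norm_num) (by norm_num) hij
  have hsingle : muW N a ({0} : Set (EuclideanSpace ℝ (Fin N))) = 0 := by
    rw [muW_apply a (measurableSet_singleton 0)]
    rw [setLIntegral_measure_zero _ _ (measure_singleton 0)]
  calc muW N a (ball (0:EuclideanSpace ℝ (Fin N)) 1)
      ≤ muW N a ({0} : Set (EuclideanSpace ℝ (Fin N))) + muW N a (⋃ k, D k) :=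
        (measure_mono hcover).trans (measure_union_le _ _)
    _ = muW N a (⋃ k, D k) := by rw [hsingle, zero_add]
    _ = ⨆ k, m k := by
        rw [hm_def]
        exact hmono.directed_le.measure_iUnion
    _ ≤ m 1 * (1 - qq)⁻¹ := iSup_le hbound
    _ < ⊤ := ENNReal.mul_lt_top hm1 (ENNReal.inv_lt_top.2 (pos_iff_ne_zero.2 hqqne))


lemma lower (hN : 3 ≤ N) (a : ℝ) :
    ∃ c1 > 0, ∀ (x : EuclideanSpace ℝ (Fin N)) (r : ℝ), 0 < r →
      ENNReal.ofReal (c1 * max ‖x‖ r ^ (-(2*a)) * r ^ N) ≤ muW N a (ball x r) := by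
  set α := -(2*a) with hα_def
  set ωr := (volume (ball (0:EuclideanSpace ℝ (Fin N)) 1)).toReal with hω_def
  have hω : 0 < ωr := ENNReal.toReal_pos (measure_ball_pos _ _ one_pos).ne' measure_ball_lt_top.ne
  refine ⟨(4:ℝ) ^ (-|α|) * ((4:ℝ)⁻¹) ^ N * ωr, by positivity, ?_⟩
  intro x r hr
  set M := max ‖x‖ r with hM_def
  have hMr : r ≤ M := le_max_right _ _
  have hMx : ‖x‖ ≤ M := le_max_left _ _
  have hM : 0 < M := lt_of_lt_of_le hr hMr
  -- construct the point z
  obtain ⟨z, hz1, hz2⟩ : ∃ z : EuclideanSpace ℝ (Fin N), dist z x = r/2 ∧ ‖z‖ = ‖x‖ + r/2 := by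
    rcases eq_or_ne x 0 with rfl | hx0
    · refine ⟨(r/2) • EuclideanSpace.single (⟨0, by omega⟩ : Fin N) (1:ℝ), ?_, ?_⟩
      · rw [dist_zero_right, norm_smul, EuclideanSpace.norm_single, norm_one, mul_one,
          Real.norm_eq_abs, abs_of_pos (half_pos hr)]
      · rw [norm_smul, EuclideanSpace.norm_single, norm_one, mul_one, Real.norm_eq_abs,
          abs_of_pos (half_pos hr), norm_zero, zero_add]
    · have hx : 0 < ‖x‖ := norm_pos_iff.2 hx0
      refine ⟨(1 + (r/2)/‖x‖) • x, ?_, ?_⟩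
      · rw [dist_eq_norm, show (1 + (r/2)/‖x‖) • x - x = ((r/2)/‖x‖) • x by
          rw [add_smul, one_smul, add_sub_cancel_left],
          norm_smul, Real.norm_eq_abs, abs_of_pos (div_pos (half_pos hr) hx),
          div_mul_cancel₀ _ hx.ne']
      · rw [norm_smul, Real.norm_eq_abs,
          abs_of_pos (by positivity : (0:ℝ) < 1 + (r/2)/‖x‖), add_mul, one_mul,
          div_mul_cancel₀ _ hx.ne']
  have hsub : ball z (r/4) ⊆ ball x r := by
    intro y hy
    rw [mem_ball] at hy ⊢
    have := dist_triangle y z x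
    rw [hz1] at this
    linarith
  have hpt : ∀ y ∈ ball z (r/4), (4:ℝ) ^ (-|α|) * M ^ α ≤ ‖y‖ ^ α := by
    intro y hy
    rw [mem_ball] at hy
    have hd : |‖z‖ - ‖y‖| ≤ dist z y := abs_norm_sub_norm_le z y
    rw [dist_comm] at hy
    have hd' := abs_le.1 hd
    have hylb : M/4 ≤ ‖y‖ := by
      have h1 : ‖x‖ + r/4 ≤ ‖y‖ := by rw [hz2] at hd'; linarith
      have : M ≤ 4*‖x‖ + r := max_le (by linarith [norm_nonneg x]) (by linarith [norm_nonneg x])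
      linarith
    have hyub : ‖y‖ ≤ 2*M := by
      have h1 : ‖y‖ ≤ ‖x‖ + 3*(r/4) := by rw [hz2] at hd'; linarith
      linarith
    have hy0 : 0 < ‖y‖ := lt_of_lt_of_le (by positivity) hylb
    rcases le_or_gt 0 α with hα | hα
    · have h1 : (M/4) ^ α ≤ ‖y‖ ^ α := Real.rpow_le_rpow (by positivity) hylb hα
      have h2 : (M/4) ^ α = (4:ℝ) ^ (-|α|) * M ^ α := by
        rw [abs_of_nonneg hα, div_eq_mul_inv, Real.mul_rpow hM.le (by norm_num),
          Real.inv_rpow (by norm_num), ← Real.rpow_neg (by norm_num)]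
        ring
      linarith [h2 ▸ h1]
    · have h1 : (2*M) ^ α ≤ ‖y‖ ^ α := Real.rpow_le_rpow_of_nonpos hy0 hyub hα.le
      have h2 : (2*M) ^ α = (2:ℝ) ^ (-|α|) * M ^ α := by
        rw [abs_of_neg hα, neg_neg, Real.mul_rpow (by norm_num) hM.le]
      have h3 : (4:ℝ) ^ (-|α|) ≤ (2:ℝ) ^ (-|α|) :=
        Real.rpow_le_rpow_of_nonpos (by norm_num) (by norm_num) (neg_nonpos.2 (abs_nonneg _))
      have hMα : 0 ≤ M ^ α := Real.rpow_nonneg hM.le _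
      nlinarith
  calc ENNReal.ofReal ((4:ℝ) ^ (-|α|) * ((4:ℝ)⁻¹) ^ N * ωr * M ^ α * r ^ N)
      = ENNReal.ofReal ((4:ℝ) ^ (-|α|) * M ^ α) * volume (ball z (r/4)) := by
        rw [vol_ball hN z (by positivity : (0:ℝ) ≤ r/4), ← hω_def,
          ← ENNReal.ofReal_mul (by positivity)]
        congr 1
        rw [show r/4 = r * 4⁻¹ by ring, mul_pow]
        ring
    _ ≤ muW N a (ball z (r/4)) := const_le_muW a measurableSet_ball hpt
    _ ≤ muW N a (ball x r) := measure_mono hsub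

lemma upper (hN : 3 ≤ N) {a : ℝ} (ha : a < ((N:ℝ)-2)/2) :
    ∃ C2 > 0, ∀ (x : EuclideanSpace ℝ (Fin N)) (r : ℝ), 0 < r →
      muW N a (ball x r) ≤ ENNReal.ofReal (C2 * max ‖x‖ r ^ (-(2*a)) * r ^ N) := by
  set α := -(2*a) with hα_def
  set ωr := (volume (ball (0:EuclideanSpace ℝ (Fin N)) 1)).toReal with hω_def
  have hω : 0 < ωr := ENNReal.toReal_pos (measure_ball_pos _ _ one_pos).ne' measure_ball_lt_top.ne
  set K := (muW N a (ball (0:EuclideanSpace ℝ (Fin N)) 1)).toReal with hK_def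
  have hK0 : 0 ≤ K := ENNReal.toReal_nonneg
  have hKofReal : muW N a (ball (0:EuclideanSpace ℝ (Fin N)) 1) = ENNReal.ofReal K :=
    (ENNReal.ofReal_toReal (muW_ball_one_lt_top hN ha).ne).symm
  set C2 := (2:ℝ)^|α| * ωr + (3:ℝ)^((N:ℝ)+α) * (2:ℝ)^|α| * K + 1 with hC2_def
  refine ⟨C2, by positivity, ?_⟩
  intro x r hr
  set M := max ‖x‖ r with hM_def
  have hMr : r ≤ M := le_max_right _ _
  have hMx : ‖x‖ ≤ M := le_max_left _ _
  have hM : 0 < M := lt_of_lt_of_le hr hMr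
  have hMα : 0 ≤ M ^ α := Real.rpow_nonneg hM.le _
  have hrN : (0:ℝ) ≤ r ^ N := by positivity
  have key : ∀ {c : ℝ}, 0 ≤ c → c ≤ (2:ℝ)^|α| → (∀ y ∈ ball x r, ‖y‖ ^ α ≤ c * M ^ α) →
      muW N a (ball x r) ≤ ENNReal.ofReal (C2 * M ^ α * r ^ N) := by
    intro c hc0 hc2 hc
    refine (muW_le_const a measurableSet_ball hc).trans ?_
    rw [vol_ball hN x hr.le, ← hω_def, ← ENNReal.ofReal_mul (by positivity)]
    refine ENNReal.ofReal_le_ofReal ?_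
    have h1 : c * M ^ α * (r ^ N * ωr) = (c * ωr) * (M ^ α * r ^ N) := by ring
    have h2 : C2 * M ^ α * r ^ N = C2 * (M ^ α * r ^ N) := by ring
    rw [h1, h2]
    refine mul_le_mul_of_nonneg_right ?_ (by positivity)
    have h3 : c * ωr ≤ (2:ℝ)^|α| * ωr := mul_le_mul_of_nonneg_right hc2 hω.le
    have h4 : (0:ℝ) ≤ (3:ℝ)^((N:ℝ)+α) * (2:ℝ)^|α| * K := by positivity
    rw [hC2_def]
    linarith
  have h2abs : (2:ℝ)^α ≤ (2:ℝ)^|α| :=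
    Real.rpow_le_rpow_of_exponent_le one_le_two (le_abs_self α)
  rcases le_or_gt 0 α with hα | hα
  · -- case A
    refine key (Real.rpow_nonneg (by norm_num) _) le_rfl fun y hy => ?_
    rw [mem_ball] at hy
    have hub : ‖y‖ ≤ 2*M := by
      have := abs_le.1 (abs_norm_sub_norm_le y x)
      rw [← dist_eq_norm] at this
      linarith [this.1]
    calc ‖y‖ ^ α ≤ (2*M) ^ α := Real.rpow_le_rpow (norm_nonneg _) hub hα
      _ = (2:ℝ)^α * M ^ α := Real.mul_rpow (by norm_num) hM.le
      _ ≤ (2:ℝ)^|α| * M ^ α := mul_le_mul_of_nonneg_right h2abs hMα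
  · rcases le_or_gt (2*r) ‖x‖ with hcase | hcase
    · -- case B
      have hMeq : M = ‖x‖ := max_eq_left (by linarith)
      refine key (Real.rpow_nonneg (by norm_num) _) le_rfl fun y hy => ?_
      rw [mem_ball] at hy
      have hlb : M/2 ≤ ‖y‖ := by
        have := abs_le.1 (abs_norm_sub_norm_le y x)
        rw [← dist_eq_norm] at this
        rw [hMeq]
        linarith [this.2]
      have h1 : ‖y‖ ^ α ≤ (M/2) ^ α :=
        Real.rpow_le_rpow_of_nonpos (by positivity) hlb hα.le
      have h2 : (M/2) ^ α = (2:ℝ)^|α| * M ^ α := by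
        rw [abs_of_neg hα, div_eq_mul_inv, Real.mul_rpow hM.le (by norm_num),
          Real.inv_rpow (by norm_num), ← Real.rpow_neg (by norm_num)]
        ring
      linarith [h2 ▸ h1]
    · -- case C
      have hM2 : M ≤ 2*r := max_le (by linarith) (by linarith)
      have hsub : ball x r ⊆ ball 0 (3*r) := by
        intro y hy
        rw [mem_ball] at hy
        rw [mem_ball_zero_iff]
        have := abs_le.1 (abs_norm_sub_norm_le y x)
        rw [← dist_eq_norm] at this
        linarith [this.1]
      have h3r : (0:ℝ) < 3*r := by linarith
      calc muW N a (ball x r) ≤ muW N a (ball 0 (3*r)) := measure_mono hsub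
        _ = ENNReal.ofReal ((3*r) ^ N) * ENNReal.ofReal ((3*r) ^ α) * ENNReal.ofReal K := by
            rw [muW_ball_zero a h3r, ← hα_def, hKofReal]
        _ = ENNReal.ofReal ((3*r) ^ N * ((3*r) ^ α * K)) := by
            rw [← ENNReal.ofReal_mul (by positivity), ← ENNReal.ofReal_mul (by positivity),
              mul_assoc]
        _ ≤ ENNReal.ofReal (C2 * M ^ α * r ^ N) := by
            refine ENNReal.ofReal_le_ofReal ?_
            have e1 : ((3:ℝ)*r) ^ N = 3 ^ N * r ^ N := mul_pow 3 r N
            have e2 : ((3:ℝ)*r) ^ α = (3:ℝ)^α * r ^ α := Real.mul_rpow (by norm_num) hr.le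
            have e3 : ((3:ℝ):ℝ) ^ (N:ℕ) * (3:ℝ)^α = (3:ℝ)^((N:ℝ)+α) := by
              rw [Real.rpow_add (by norm_num : (0:ℝ) < 3), Real.rpow_natCast]
            -- r ^ α ≤ 2^|α| * M ^ α
            have h5 : ((2:ℝ)*r) ^ α ≤ M ^ α :=
              Real.rpow_le_rpow_of_nonpos hM hM2 hα.le
            have h6 : ((2:ℝ)*r) ^ α = (2:ℝ)^α * r ^ α := Real.mul_rpow (by norm_num) hr.le
            have h7 : r ^ α ≤ (2:ℝ)^|α| * M ^ α := by
              have h8 : (2:ℝ)^(-α) * ((2:ℝ)^α * r ^ α) ≤ (2:ℝ)^(-α) * M ^ α :=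
                mul_le_mul_of_nonneg_left (h6 ▸ h5) (Real.rpow_nonneg (by norm_num) _)
              rw [← mul_assoc, ← Real.rpow_add (by norm_num : (0:ℝ) < 2), neg_add_cancel,
                Real.rpow_zero, one_mul] at h8
              rw [abs_of_neg hα]
              exact h8
            have h9 : (0:ℝ) ≤ (3:ℝ)^((N:ℝ)+α) * K := by positivity
            have h10 : (3*r) ^ N * ((3*r) ^ α * K) =
                ((3:ℝ)^(N:ℕ) * (3:ℝ)^α * K) * r ^ α * r ^ N := by
              rw [e1, e2]; ring
            have h11 : ((3:ℝ)^(N:ℕ) * (3:ℝ)^α * K) * r ^ α * r ^ N ≤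
                ((3:ℝ)^(N:ℕ) * (3:ℝ)^α * K) * ((2:ℝ)^|α| * M ^ α) * r ^ N := by
              have : (0:ℝ) ≤ (3:ℝ)^(N:ℕ) * (3:ℝ)^α * K := by positivity
              exact mul_le_mul_of_nonneg_right (mul_le_mul_of_nonneg_left h7 this) hrN
            have h12 : ((3:ℝ)^(N:ℕ) * (3:ℝ)^α * K) * ((2:ℝ)^|α| * M ^ α) * r ^ N
                = ((3:ℝ)^((N:ℝ)+α) * (2:ℝ)^|α| * K) * M ^ α * r ^ N := by
              rw [← e3]; ring
            have h13 : ((3:ℝ)^((N:ℝ)+α) * (2:ℝ)^|α| * K) * M ^ α * r ^ N ≤ C2 * M ^ α * r ^ N := by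
              refine mul_le_mul_of_nonneg_right (mul_le_mul_of_nonneg_right ?_ hMα) hrN
              rw [hC2_def]
              have : (0:ℝ) ≤ (2:ℝ)^|α| * ωr := by positivity
              linarith
            calc (3*r) ^ N * ((3*r) ^ α * K) = _ := h10
              _ ≤ _ := h11
              _ = _ := h12
              _ ≤ _ := h13

end FS

/-- The weighted measure `μ_a` is doubling (property (2.1) of Felli–Schneider). -/
theorem statement8 {N : ℕ} (hN : 3 ≤ N) (a : ℝ) (ha : a < ((N : ℝ) - 2) / 2)
    (τ : ℝ) (hτ : τ ∈ Set.Ioo (0 : ℝ) 1) :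
    ∃ C > (0 : ℝ),
      ∀ (x : EuclideanSpace ℝ (Fin N)) (r : ℝ), 0 < r →
        muW N a (Metric.ball x r) ≤ ENNReal.ofReal C * muW N a (Metric.ball x (τ * r)) := by
  obtain ⟨hτ0, hτ1⟩ := hτ
  obtain ⟨C2, hC2, hup⟩ := FS.upper hN ha
  obtain ⟨c1, hc1, hlo⟩ := FS.lower hN a
  set α := -(2*a) with hα_def
  set t := max 1 (τ ^ (-α)) with ht_def
  have ht1 : (1:ℝ) ≤ t := le_max_left _ _
  have ht0 : (0:ℝ) < t := lt_of_lt_of_le one_pos ht1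
  refine ⟨C2 * (τ⁻¹)^N * t / c1, by positivity, ?_⟩
  intro x r hr
  have hτr : 0 < τ * r := mul_pos hτ0 hr
  refine (hup x r hr).trans ?_
  set M := max ‖x‖ r with hM_def
  set M' := max ‖x‖ (τ*r) with hM'_def
  have hM'r : τ*r ≤ M' := le_max_right _ _
  have hM' : 0 < M' := lt_of_lt_of_le hτr hM'r
  have hM : 0 < M := lt_of_lt_of_le hr (le_max_right _ _)
  have hMM' : M' ≤ M := by
    refine max_le (le_max_left _ _) (le_trans ?_ (le_max_right ‖x‖ r))
    nlinarith
  have hM'up : M ≤ M' / τ := by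
    refine max_le ?_ ?_
    · exact (le_max_left ‖x‖ (τ*r)).trans (le_div_self hM'.le hτ0 hτ1.le)
    · rw [show r = τ * r / τ by rw [mul_div_cancel_left₀ r hτ0.ne']]
      gcongr
  have hM'α : (0:ℝ) ≤ M' ^ α := Real.rpow_nonneg hM'.le _
  have claim : M ^ α ≤ t * M' ^ α := by
    rcases le_or_gt 0 α with hα | hα
    · have h1 : M ^ α ≤ (M'/τ) ^ α := Real.rpow_le_rpow hM.le hM'up hα
      have h2 : (M'/τ) ^ α = τ ^ (-α) * M' ^ α := by
        rw [Real.div_rpow hM'.le hτ0.le, div_eq_mul_inv, ← Real.rpow_neg hτ0.le]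
        exact mul_comm _ _
      have h3 : τ ^ (-α) ≤ t := le_max_right _ _
      calc M ^ α ≤ (M'/τ) ^ α := h1
        _ = τ ^ (-α) * M' ^ α := h2
        _ ≤ t * M' ^ α := mul_le_mul_of_nonneg_right h3 hM'α
    · calc M ^ α ≤ M' ^ α := Real.rpow_le_rpow_of_nonpos hM' hMM' hα.le
        _ ≤ t * M' ^ α := by nlinarith
  calc ENNReal.ofReal (C2 * M ^ α * r ^ N)
      ≤ ENNReal.ofReal ((C2 * (τ⁻¹)^N * t / c1) * (c1 * M' ^ α * (τ*r) ^ N)) := by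
        refine ENNReal.ofReal_le_ofReal ?_
        have e : (C2 * (τ⁻¹)^N * t / c1) * (c1 * M' ^ α * (τ*r) ^ N)
            = C2 * (t * M' ^ α) * r ^ N := by
          rw [mul_pow, inv_pow]
          field_simp
        rw [e]
        have hrN : (0:ℝ) ≤ r ^ N := by positivity
        exact mul_le_mul_of_nonneg_right (mul_le_mul_of_nonneg_left claim hC2.le) hrN
    _ = ENNReal.ofReal (C2 * (τ⁻¹)^N * t / c1) * ENNReal.ofReal (c1 * M' ^ α * (τ*r) ^ N) :=
        ENNReal.ofReal_mul (by positivity)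
    _ ≤ ENNReal.ofReal (C2 * (τ⁻¹)^N * t / c1) * muW N a (ball x (τ*r)) :=
        mul_le_mul_right (hlo x (τ*r) hτr) _
end
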